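/- Under hypothesis (I), for a plane π of PG(4,q) (q even) not containing the red point, if x is the number of black points in π and s is the number of solids of H containing π, then x = 2s+1. -/

import Mathlib

open Submodule Set

/-- Points of `PG(4,q)`: one-dimensional subspaces of `F^5`. -/
abbrev PGPoint (F : Type*) [Field F] := {W : Submodule F (Fin 5 → F) // Module.finrank F W = 1}
/-- Lines of `PG(4,q)`: two-dimensional subspaces of `F^5`. -/
abbrev PGLine (F : Type*) [Field F] := {W : Submodule F (Fin 5 → F) // Module.finrank F W = 2}
/-- Planes of `PG(4,q)`: three-dimensional subspaces of `F^5`. -/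
abbrev PGPlane (F : Type*) [Field F] := {W : Submodule F (Fin 5 → F) // Module.finrank F W = 3}
/-- Solids (hyperplanes) of `PG(4,q)`: four-dimensional subspaces of `F^5`. -/
abbrev PGSolid (F : Type*) [Field F] := {W : Submodule F (Fin 5 → F) // Module.finrank F W = 4}

variable {F : Type*} [Field F]

/-- The solids of `H` through the point `P`. -/
def solidsThrough (H : Set (PGSolid F)) (P : PGPoint F) : Set (PGSolid F) :=
  {S ∈ H | P.1 ≤ S.1}

/-- Hypothesis (I): every point lies on `0`, `q^3/2` or `(q^3+q^2)/2` solids of `H`. -/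
def CondI (q : ℕ) (H : Set (PGSolid F)) : Prop :=
  ∀ P : PGPoint F,
    (solidsThrough H P).ncard = 0 ∨
    2 * (solidsThrough H P).ncard = q ^ 3 ∨
    2 * (solidsThrough H P).ncard = q ^ 3 + q ^ 2

/-- A red point: lies on no solid of `H`. -/
def Red (H : Set (PGSolid F)) (P : PGPoint F) : Prop := (solidsThrough H P).ncard = 0

/-- A white point: lies on `q^3/2` solids of `H`. -/
def White (q : ℕ) (H : Set (PGSolid F)) (P : PGPoint F) : Prop :=
  2 * (solidsThrough H P).ncard = q ^ 3

/-- A black point: lies on `(q^3+q^2)/2` solids of `H`. -/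
def Black (q : ℕ) (H : Set (PGSolid F)) (P : PGPoint F) : Prop :=
  2 * (solidsThrough H P).ncard = q ^ 3 + q ^ 2

/-- The black points contained in a subspace `W`. -/
def blackIn (q : ℕ) (H : Set (PGSolid F)) (W : Submodule F (Fin 5 → F)) : Set (PGPoint F) :=
  {P : PGPoint F | Black q H P ∧ P.1 ≤ W}

/-!
Let `n P` be the number of solids of `H` through the point `P`, so that `2 n P ∈ {0, q³, q³ + q²}`
by (I), and let `θₖ = 1 + q + ⋯ + q^(k-1)`. Double counting incidences of points with solids and
with ordered pairs of distinct solids (which meet in a plane) gives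
`∑ n P = |H| θ₄` and `∑ n P (n P - 1) = |H| (|H| - 1) θ₃`. As `θ₄` is prime to `q`,
`2 |H| = q² v`, and the two identities become `v θ₄ = w q + b (q + 1)` and
`b (q + 1) = v ((v - q²) θ₃ + q)`, with `w` and `b` the numbers of white and black points.
Hence `0 ≤ v - q² < q` and `q ∣ (v - q²)(v - q² - 1)`; since `q` is a power of two,
`v - q² ∈ {0, 1}`, and `v = q²` is impossible because `q + 1 ∤ q³`. So `2 |H| = q⁴ + q²`.
Finally, the points of `π` are black or white, and counting their incidences with `H`,
`x (q³ + q²) + (θ₃ - x) q³ = 2 (s θ₃ + (|H| - s)(q + 1))`, which is `x = 2 s + 1`.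
-/

open Finset Module

theorem Submodule.card_finrank_eq_one_le {K V : Type*} [Field K] [AddCommGroup V] [Module K V]
    [Finite K] (W : Submodule K V) :
    Nat.card {P : Submodule K V // finrank K P = 1 ∧ P ≤ W} =
      ∑ i ∈ range (finrank K W), Nat.card K ^ i := by
  rw [← Projectivization.card_of_finrank K W rfl]
  refine Nat.card_congr (((Equiv.subtypeEquivRight fun _ => and_comm).trans
    (Equiv.subtypeSubtypeEquivSubtypeInter _ _).symm).trans ?_)
  exact (((MapSubtype.orderIso W).toEquiv.subtypeEquiv fun U =>
    (finrank_map_subtype_eq W U).symm ▸ Iff.rfl).symm.trans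
    (Projectivization.equivSubmodule K W).symm)

theorem Submodule.finrank_inf_add_one_of_not_le {K V : Type*} [Field K] [AddCommGroup V]
    [Module K V] [FiniteDimensional K V] {U S : Submodule K V}
    (hS : finrank K S + 1 = finrank K V) (hUS : ¬ U ≤ S) :
    finrank K ↥(U ⊓ S) + 1 = finrank K U := by
  have hlt : S < U ⊔ S := lt_of_le_of_ne le_sup_right fun h => hUS (h ▸ le_sup_left)
  have := Submodule.finrank_lt_finrank_of_lt hlt
  have := Submodule.finrank_le (U ⊔ S)
  have := Submodule.finrank_sup_add_finrank_inf_eq U S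
  omega

theorem Finset.sum_comp_eq_of_mapsTo_three {ι β M : Type*} [DecidableEq β] [AddCommMonoid M]
    {s : Finset ι} {g : ι → β} {a b c : β} (hab : a ≠ b) (hac : a ≠ c) (hbc : b ≠ c)
    (hg : ∀ i ∈ s, g i = a ∨ g i = b ∨ g i = c) (f : β → M) :
    ∑ i ∈ s, f (g i) =
      #{i ∈ s | g i = a} • f a + #{i ∈ s | g i = b} • f b + #{i ∈ s | g i = c} • f c := by
  have fiber (y : β) : ∑ i ∈ s with g i = y, f (g i) = #{i ∈ s | g i = y} • f y := by
    rw [← sum_const]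
    exact sum_congr rfl fun i hi => by rw [(mem_filter.1 hi).2]
  rw [← sum_fiberwise_of_maps_to (t := {a, b, c}) (g := g) (by simpa using hg),
    sum_insert (by simp [hab, hac]), sum_pair hbc, fiber, fiber, fiber, add_assoc]

theorem Finset.natCast_card_offDiag {α : Type*} (s : Finset α) :
    (#s.offDiag : ℤ) = #s * (#s - 1) := by
  rw [offDiag_card, Nat.cast_sub (Nat.le_mul_self _)]
  push_cast
  ring

theorem Set.ncard_sep_eq_card_filter_toFinset {α : Type*} [Fintype α] (s : Set α)
    [DecidablePred (· ∈ s)] (p : α → Prop) [DecidablePred p] :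
    {x ∈ s | p x}.ncard = #{x ∈ s.toFinset | p x} := by
  rw [← Set.ncard_coe_finset]
  congr
  ext
  simp

theorem Nat.eq_zero_of_two_pow_dvd_mul_succ {n u : ℕ} (hu : u + 1 < 2 ^ n)
    (hdvd : 2 ^ n ∣ u * (u + 1)) : u = 0 := by
  by_contra! h
  have hn : n ≠ 0 := by rintro rfl; omega
  have hcop : Nat.Coprime u (u + 1) := by simp
  rcases (hcop.isPrimePow_dvd_mul (Nat.prime_two.isPrimePow.pow hn)).1 hdvd with h' | h' <;>
    exact absurd (Nat.le_of_dvd (by omega) h') (by omega)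

theorem eq_sq_add_one_of_moments {q n : ℕ} (hn : 0 < n) (hq : q = 2 ^ n) {v w b : ℤ}
    (hv : 0 < v) (hw : 0 ≤ w) (hb : 0 ≤ b)
    (h₁ : v * (q ^ 3 + q ^ 2 + q + 1) = w * q + b * (q + 1))
    (h₂ : b * (q + 1) = v * ((v - q ^ 2) * (q ^ 2 + q + 1) + q)) :
    v = q ^ 2 + 1 := by
  have hq2 : (2 : ℤ) ≤ q := by
    subst hq; push_cast; exact le_self_pow₀ (by norm_num) hn.ne'
  obtain ⟨t, rfl⟩ : ∃ t, v = q ^ 2 + t := ⟨v - q ^ 2, by ring⟩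
  have hpos : 0 ≤ t * (q ^ 2 + q + 1) + q :=
    (mul_nonneg_iff_of_pos_left hv).1 (by nlinarith)
  have hle : t * (q ^ 2 + q + 1) + q ≤ q ^ 3 + q ^ 2 + q + 1 :=
    le_of_mul_le_mul_left (by nlinarith) hv
  have ht0 : 0 ≤ t := by nlinarith
  have htq : t < q := by nlinarith
  -- Modulo `q`, `h₁` reads `t ≡ b` and `h₂` reads `b ≡ t²`.
  have hdvd : (q : ℤ) ∣ t * (t - 1) :=
    ⟨q * (q ^ 3 + q ^ 2 + q + 1) - q * (t * (q ^ 2 + q + 1) + q) - t ^ 2 * (q + 1) - t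
      + t * (q ^ 2 + q + 1) - w, by linear_combination -h₂ - h₁⟩
  have ht1 : t ≠ 0 := by
    rintro rfl
    have hcop : IsCoprime ((q : ℤ) + 1) (q ^ 3) := IsCoprime.pow_right ⟨1, -1, by ring⟩
    have := hcop.isUnit_of_dvd' dvd_rfl ⟨b, by linear_combination -h₂⟩
    rcases Int.isUnit_iff.1 this with h | h <;> omega
  obtain ⟨u, rfl⟩ : ∃ u : ℕ, t = u + 1 := ⟨(t - 1).toNat, by omega⟩
  have hdvd' : q ∣ u * (u + 1) := by
    have : (q : ℤ) ∣ ((u * (u + 1) : ℕ) : ℤ) := by push_cast; convert hdvd using 1; ring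
    exact_mod_cast this
  subst hq
  obtain rfl := Nat.eq_zero_of_two_pow_dvd_mul_succ (by exact_mod_cast htq) hdvd'
  simp

theorem two_mul_eq_pow_four_add_sq_of_moments {q n : ℕ} (hn : 0 < n) (hq : q = 2 ^ n)
    {h w b : ℤ} (hh : 0 < h) (hw : 0 ≤ w) (hb : 0 ≤ b)
    (e1 : 2 * h * (q ^ 3 + q ^ 2 + q + 1) = w * q ^ 3 + b * (q ^ 3 + q ^ 2))
    (e2 : 4 * (h * (h - 1)) * (q ^ 2 + q + 1) =
      w * (q ^ 3 * (q ^ 3 - 2)) + b * ((q ^ 3 + q ^ 2) * (q ^ 3 + q ^ 2 - 2))) :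
    2 * h = q ^ 4 + q ^ 2 := by
  have hq0 : (q : ℤ) ≠ 0 := by subst hq; positivity
  obtain ⟨v, hv⟩ : (q : ℤ) ^ 2 ∣ 2 * h := by
    have hcop : IsCoprime ((q : ℤ) ^ 2) (q ^ 3 + q ^ 2 + q + 1) :=
      IsCoprime.pow_left ⟨-(q ^ 2 + q + 1), 1, by ring⟩
    exact hcop.dvd_of_dvd_mul_right ⟨w * q + b * (q + 1), by linear_combination e1⟩
  have h₁ : v * (q ^ 3 + q ^ 2 + q + 1) = w * q + b * (q + 1) :=
    mul_left_cancel₀ (pow_ne_zero 2 hq0)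
      (by linear_combination e1 - (q ^ 3 + q ^ 2 + q + 1) * hv)
  have h₂ : b * (q + 1) = v * ((v - q ^ 2) * (q ^ 2 + q + 1) + q) :=
    mul_left_cancel₀ (pow_ne_zero 4 hq0) (by
      linear_combination -e2 + (q ^ 2 + q + 1) * (2 * h + q ^ 2 * v - 2) * hv
        + (q : ℤ) ^ 2 * (q ^ 3 - 2) * h₁)
  have hv0 : 0 < v := by nlinarith
  rw [hv, eq_sq_add_one_of_moments hn hq hv0 hw hb h₁ h₂]
  ring

theorem finrank_inf_add_one_of_not_le_solid {U : Submodule F (Fin 5 → F)} (S : PGSolid F)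
    (h : ¬ U ≤ S.1) : finrank F ↥(U ⊓ S.1) + 1 = finrank F U :=
  Submodule.finrank_inf_add_one_of_not_le (by rw [S.2, finrank_fin_fun]) h

theorem finrank_inf_of_ne {S T : PGSolid F} (h : S ≠ T) : finrank F ↥(S.1 ⊓ T.1) = 3 := by
  have hST : ¬ S.1 ≤ T.1 := fun hle =>
    h (Subtype.ext (Submodule.eq_of_le_of_finrank_eq hle (by rw [S.2, T.2])))
  have := finrank_inf_add_one_of_not_le_solid T hST
  rw [S.2] at this
  omega

theorem finrank_inf_of_not_le {π : PGPlane F} {S : PGSolid F} (h : ¬ π.1 ≤ S.1) :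
    finrank F ↥(π.1 ⊓ S.1) = 2 := by
  have := finrank_inf_add_one_of_not_le_solid S h
  rw [π.2] at this
  omega

section Counting

open scoped Classical

theorem sum_comp_two_mul_ncard_solidsThrough {q : ℕ} (hq : 0 < q) {H : Set (PGSolid F)}
    (hI : CondI q H) (s : Finset (PGPoint F)) (f : ℕ → ℤ) :
    ∑ P ∈ s, f (2 * (solidsThrough H P).ncard) =
      #{P ∈ s | Red H P} • f 0 + #{P ∈ s | White q H P} • f (q ^ 3) +
        #{P ∈ s | Black q H P} • f (q ^ 3 + q ^ 2) := by
  have hred : {P ∈ s | Red H P} = {P ∈ s | 2 * (solidsThrough H P).ncard = 0} :=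
    filter_congr fun P _ => by unfold Red; omega
  rw [hred]
  convert sum_comp_eq_of_mapsTo_three (g := fun P => 2 * (solidsThrough H P).ncard)
    (a := 0) (b := q ^ 3) (c := q ^ 3 + q ^ 2) (by positivity) (by positivity) (by simp [hq.ne'])
    (fun P _ => by rcases hI P with h | h | h <;> omega) f <;> rfl

variable [Fintype F]

noncomputable instance : Fintype (PGPoint F) := Fintype.ofFinite _
noncomputable instance : Fintype (PGSolid F) := Fintype.ofFinite _

noncomputable def pointsOf (W : Submodule F (Fin 5 → F)) : Finset (PGPoint F) := {P | P.1 ≤ W}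

theorem mem_pointsOf {W : Submodule F (Fin 5 → F)} {P : PGPoint F} :
    P ∈ pointsOf W ↔ P.1 ≤ W := by
  simp [pointsOf]

theorem pointsOf_top : pointsOf (⊤ : Submodule F (Fin 5 → F)) = Finset.univ := by
  ext
  simp [mem_pointsOf]

theorem card_pointsOf (W : Submodule F (Fin 5 → F)) :
    #(pointsOf W) = ∑ i ∈ range (finrank F W), Fintype.card F ^ i := by
  rw [← Nat.card_eq_fintype_card, ← W.card_finrank_eq_one_le, ← Nat.card_eq_finsetCard]
  exact Nat.card_congr ((Equiv.subtypeEquivRight fun _ => mem_pointsOf).trans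
    (Equiv.subtypeSubtypeEquivSubtypeInter (fun P : Submodule F _ => finrank F P = 1) (· ≤ W)))

theorem sum_card_filter_le_eq_sum_card_pointsOf_inf {ι : Type*} (𝒮 : Finset ι)
    (f : ι → Submodule F (Fin 5 → F)) (U : Submodule F (Fin 5 → F)) :
    ∑ P ∈ pointsOf U, #{X ∈ 𝒮 | P.1 ≤ f X} = ∑ X ∈ 𝒮, #(pointsOf (U ⊓ f X)) := by
  refine (sum_card_bipartiteAbove_eq_sum_card_bipartiteBelow
    (fun (P : PGPoint F) X => P.1 ≤ f X)).trans (sum_congr rfl fun X _ => congrArg card ?_)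
  ext P
  simp [bipartiteBelow, mem_pointsOf]

theorem ncard_solidsThrough (H : Set (PGSolid F)) (P : PGPoint F) :
    (solidsThrough H P).ncard = #{S ∈ H.toFinset | P.1 ≤ S.1} :=
  Set.ncard_sep_eq_card_filter_toFinset H _

theorem ncard_blackIn (q : ℕ) (H : Set (PGSolid F)) (W : Submodule F (Fin 5 → F)) :
    (blackIn q H W).ncard = #{P ∈ pointsOf W | Black q H P} := by
  rw [← Set.ncard_coe_finset]
  congr
  ext
  simp [blackIn, mem_pointsOf, and_comm]

variable {q : ℕ} (hcard : Fintype.card F = q) (H : Set (PGSolid F))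
include hcard

theorem card_pointsOf_of_finrank_eq_two {W : Submodule F (Fin 5 → F)} (hW : finrank F W = 2) :
    #(pointsOf W) = q + 1 := by
  rw [card_pointsOf, hW, hcard]
  simp only [sum_range_succ, sum_range_zero]
  ring

theorem card_pointsOf_of_finrank_eq_three {W : Submodule F (Fin 5 → F)}
    (hW : finrank F W = 3) : #(pointsOf W) = q ^ 2 + q + 1 := by
  rw [card_pointsOf, hW, hcard]
  simp only [sum_range_succ, sum_range_zero]
  ring

theorem card_pointsOf_of_finrank_eq_four {W : Submodule F (Fin 5 → F)}
    (hW : finrank F W = 4) : #(pointsOf W) = q ^ 3 + q ^ 2 + q + 1 := by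
  rw [card_pointsOf, hW, hcard]
  simp only [sum_range_succ, sum_range_zero]
  ring

theorem sum_ncard_solidsThrough :
    ∑ P, ((solidsThrough H P).ncard : ℤ) = H.ncard * (q ^ 3 + q ^ 2 + q + 1) := by
  have hS (S : PGSolid F) : #(pointsOf (⊤ ⊓ S.1)) = q ^ 3 + q ^ 2 + q + 1 := by
    rw [top_inf_eq, card_pointsOf_of_finrank_eq_four hcard S.2]
  simp_rw [ncard_solidsThrough]
  rw [← Nat.cast_sum, ← pointsOf_top, sum_card_filter_le_eq_sum_card_pointsOf_inf,
    sum_congr rfl fun S _ => hS S, sum_const, smul_eq_mul, Set.ncard_eq_toFinset_card']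
  push_cast
  ring

theorem sum_ncard_solidsThrough_mul_pred :
    ∑ P, ((solidsThrough H P).ncard : ℤ) * ((solidsThrough H P).ncard - 1) =
      H.ncard * (H.ncard - 1) * (q ^ 2 + q + 1) := by
  have hpairs (P : PGPoint F) : {S ∈ H.toFinset | P.1 ≤ S.1}.offDiag =
      {e ∈ H.toFinset.offDiag | P.1 ≤ e.1.1 ⊓ e.2.1} := by
    ext
    simp only [Finset.mem_offDiag, Finset.mem_filter, le_inf_iff]
    tauto
  have hcount : ∑ P : PGPoint F, #{e ∈ H.toFinset.offDiag | P.1 ≤ e.1.1 ⊓ e.2.1} =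
      #H.toFinset.offDiag * (q ^ 2 + q + 1) := by
    rw [← pointsOf_top, sum_card_filter_le_eq_sum_card_pointsOf_inf, sum_const_nat]
    intro e he
    rw [top_inf_eq, card_pointsOf_of_finrank_eq_three hcard
      (finrank_inf_of_ne (Finset.mem_offDiag.1 he).2.2)]
  simp_rw [ncard_solidsThrough, ← natCast_card_offDiag, hpairs]
  rw [← Nat.cast_sum, hcount, Set.ncard_eq_toFinset_card']
  push_cast [natCast_card_offDiag]
  ring

theorem sum_ncard_solidsThrough_plane (π : PGPlane F) :
    ∑ P ∈ pointsOf π.1, ((solidsThrough H P).ncard : ℤ) =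
      {S ∈ H | π.1 ≤ S.1}.ncard * (q ^ 2 + q + 1) +
        (H.ncard - {S ∈ H | π.1 ≤ S.1}.ncard) * (q + 1) := by
  have hcard_inf (S : PGSolid F) : #(pointsOf (π.1 ⊓ S.1)) =
      if π.1 ≤ S.1 then q ^ 2 + q + 1 else q + 1 := by
    split_ifs with h
    · rw [inf_eq_left.2 h, card_pointsOf_of_finrank_eq_three hcard π.2]
    · rw [card_pointsOf_of_finrank_eq_two hcard (finrank_inf_of_not_le h)]
  have hsplit :=
    card_filter_add_card_filter_not (s := H.toFinset) (fun S : PGSolid F => π.1 ≤ S.1)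
  simp_rw [ncard_solidsThrough]
  rw [← Nat.cast_sum, sum_card_filter_le_eq_sum_card_pointsOf_inf]
  simp_rw [hcard_inf]
  rw [sum_ite, sum_const, sum_const, smul_eq_mul, smul_eq_mul,
    Set.ncard_sep_eq_card_filter_toFinset, Set.ncard_eq_toFinset_card', ← hsplit]
  push_cast
  ring

theorem two_mul_ncard_eq_of_condI {n : ℕ} (hn : 0 < n) (hq : q = 2 ^ n) (hne : H.Nonempty)
    (hI : CondI q H) : 2 * H.ncard = q ^ 4 + q ^ 2 := by
  have hsum := sum_comp_two_mul_ncard_solidsThrough (by rw [hq]; positivity) hI Finset.univ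
  have e1 := hsum (fun k => k)
  have e2 := hsum (fun k => k * (k - 2))
  have h1 := sum_ncard_solidsThrough hcard H
  have h2 := sum_ncard_solidsThrough_mul_pred hcard H
  simp only [nsmul_eq_mul] at e1 e2
  push_cast at e1 e2
  rw [← mul_sum] at e1
  have h4 : ∑ P, 2 * ((solidsThrough H P).ncard : ℤ) * (2 * (solidsThrough H P).ncard - 2) =
      4 * ∑ P, ((solidsThrough H P).ncard : ℤ) * ((solidsThrough H P).ncard - 1) := by
    rw [mul_sum]
    exact sum_congr rfl fun P _ => by ring
  have := two_mul_eq_pow_four_add_sq_of_moments hn hq (h := H.ncard)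
    (w := #{P | White q H P}) (b := #{P | Black q H P})
    (Nat.cast_pos.2 ((Set.ncard_pos H.toFinite).2 hne)) (Nat.cast_nonneg _) (Nat.cast_nonneg _)
    (by linear_combination e1 - 2 * h1) (by linear_combination e2 - h4 - 4 * h2)
  exact_mod_cast this

theorem ncard_blackIn_eq_two_mul_add_one (hq : 0 < q) (hI : CondI q H)
    (hH : 2 * H.ncard = q ^ 4 + q ^ 2) (π : PGPlane F)
    (hπ : ∀ P : PGPoint F, Red H P → ¬ P.1 ≤ π.1) :
    (blackIn q H π.1).ncard = 2 * {S ∈ H | π.1 ≤ S.1}.ncard + 1 := by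
  have hsum := sum_comp_two_mul_ncard_solidsThrough hq hI (pointsOf π.1)
  have hred : #{P ∈ pointsOf π.1 | Red H P} = 0 :=
    card_eq_zero.2 (filter_eq_empty_iff.2 fun P hP hP' => hπ P hP' (mem_pointsOf.1 hP))
  have e0 := hsum 1
  have e1 := hsum (fun k => k)
  simp only [Pi.one_apply, sum_const, card_pointsOf_of_finrank_eq_three hcard π.2, nsmul_eq_mul,
    hred] at e0 e1
  push_cast at e0 e1
  rw [← mul_sum, sum_ncard_solidsThrough_plane hcard H π, ← ncard_blackIn] at e1
  rw [← ncard_blackIn] at e0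
  have hH' : 2 * (H.ncard : ℤ) = q ^ 4 + q ^ 2 := by exact_mod_cast hH
  have hq2 : (q : ℤ) ^ 2 ≠ 0 := by positivity
  have : ((blackIn q H π.1).ncard : ℤ) = 2 * {S ∈ H | π.1 ≤ S.1}.ncard + 1 :=
    mul_right_cancel₀ hq2 (by linear_combination -e1 + (q : ℤ) ^ 3 * e0 + (q + 1) * hH')
  exact_mod_cast this

end Counting

theorem stmt8 (q : ℕ) (hq : ∃ n : ℕ, 0 < n ∧ q = 2 ^ n)
    (F : Type*) [Field F] [Fintype F] (hcard : Fintype.card F = q)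
    (H : Set (PGSolid F)) (hne : H.Nonempty) (hI : CondI q H)
    (π : PGPlane F) (hπ : ∀ P : PGPoint F, Red H P → ¬ P.1 ≤ π.1)
    (x s : ℕ) (hx : x = (blackIn q H π.1).ncard)
    (hs : s = {S ∈ H | π.1 ≤ S.1}.ncard) :
    x = 2 * s + 1 := by
  obtain ⟨n, hn, hqn⟩ := hq
  rw [hx, hs]
  exact ncard_blackIn_eq_two_mul_add_one hcard H (by rw [hqn]; positivity) hI
    (two_mul_ncard_eq_of_condI hcard H hn hqn hne hI) π hπ
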